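/- Fix an integer k ≥ 1. A smooth vector field v on ℝ³ is an infinitesimal symmetry of the system Σ_P^{0,k} (with drift (w^{2k}, w^k, 0) and control field (0,0,1)) if and only if v(x,y,w) = (2a·x + b, a·y + c, a·w/k) for some real constants a, b, c; i.e., the Lie algebra of infinitesimal symmetries of Σ_P^{0,k} is exactly the real linear span of the vector fields (1,0,0), (0,1,0), and (2x, y, w/k), and it is isomorphic to 𝔏_P. -/

import Mathlib

open Real Set

/-- The state space ℝ³ with coordinates (x, y, w). -/
abbrev V3 : Type := Fin 3 → ℝ

/-- Lie bracket of vector fields: [v,u](ξ) = Du(ξ)·v(ξ) − Dv(ξ)·u(ξ). -/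
noncomputable def lieBr (v u : V3 → V3) : V3 → V3 :=
  fun ξ => fderiv ℝ u ξ (v ξ) - fderiv ℝ v ξ (u ξ)

/-- `v` is an infinitesimal symmetry of the control-affine system `(f, g)` on `U`. -/
def InfSymmOn (U : Set V3) (f g v : V3 → V3) : Prop :=
  ∀ ξ ∈ U, (∃ c : ℝ, lieBr v g ξ = c • g ξ) ∧ (∃ c : ℝ, lieBr v f ξ = c • g ξ)

/-- The control vector field g₀ = ∂/∂w. -/
def g0 : V3 → V3 := fun _ => ![0, 0, 1]

/-- Drift of the system Σ_P^{0,k}: (w^{2k}, w^k, 0). -/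
noncomputable def fPk (k : ℕ) : V3 → V3 := fun ξ => ![(ξ 2) ^ (2 * k), (ξ 2) ^ k, 0]

namespace SymmAux

open ContinuousLinearMap

/-- basis vectors -/
noncomputable def E0 : V3 := ![1, 0, 0]
noncomputable def E1 : V3 := ![0, 1, 0]
noncomputable def E2 : V3 := ![0, 0, 1]

lemma decomp (ξ : V3) : ξ = ((![0,0,0] + ξ 0 • E0) + ξ 1 • E1) + ξ 2 • E2 := by
  funext i; fin_cases i <;> simp [E0, E1, E2]

/-- derivative of the drift -/
noncomputable def Dfk (k : ℕ) (w : ℝ) : V3 →L[ℝ] V3 :=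
  ContinuousLinearMap.pi ![(((2*k : ℕ) : ℝ) * w ^ (2*k-1)) • proj 2,
    (((k : ℕ) : ℝ) * w ^ (k-1)) • proj 2, 0]

lemma hasFDerivAt_fPk (k : ℕ) (ξ : V3) : HasFDerivAt (fPk k) (Dfk k (ξ 2)) ξ := by
  apply hasFDerivAt_pi''
  intro i
  fin_cases i <;>
    simp only [fPk, Dfk, proj_pi, Matrix.cons_val_zero, Matrix.cons_val_one, Matrix.head_cons,
      Matrix.cons_val_two, Matrix.tail_cons, Fin.isValue]
  · exact HasDerivAt.comp_hasFDerivAt (𝕜 := ℝ) ξ (hasDerivAt_pow (2*k) (ξ 2)) (hasFDerivAt_apply 2 ξ)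
  · exact HasDerivAt.comp_hasFDerivAt (𝕜 := ℝ) ξ (hasDerivAt_pow k (ξ 2)) (hasFDerivAt_apply 2 ξ)
  · exact hasFDerivAt_const 0 ξ

lemma Dfk_apply (k : ℕ) (w : ℝ) (h : V3) :
    Dfk k w h = ![((2*k : ℕ) : ℝ) * w ^ (2*k-1) * h 2, ((k : ℕ) : ℝ) * w ^ (k-1) * h 2, 0] := by
  funext i
  fin_cases i <;> simp [Dfk, Matrix.cons_val_two, Matrix.tail_cons, mul_assoc]

/-- affine values along lines -/
lemma line_eq {u : V3 → ℝ} (hu : Differentiable ℝ u) {d : V3} {m : ℝ}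
    (h : ∀ ξ, fderiv ℝ u ξ d = m) (ξ : V3) (t : ℝ) : u (ξ + t • d) = u ξ + t * m := by
  have key : ∀ s : ℝ, HasDerivAt (fun s : ℝ => u (ξ + s • d) - s * m)
      (fderiv ℝ u (ξ + s • d) d - m) s := by
    intro s
    have hline : HasDerivAt (fun s : ℝ => ξ + s • d) d s := by
      simpa using ((hasDerivAt_id s).smul_const d).const_add ξ
    have h1 : HasDerivAt (fun s : ℝ => u (ξ + s • d)) (fderiv ℝ u (ξ + s • d) d) s := by
      exact (hu (ξ + s • d)).hasFDerivAt.comp_hasDerivAt s hline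
    exact h1.sub (hasDerivAt_mul_const m)
  have hd : ∀ s : ℝ, deriv (fun s : ℝ => u (ξ + s • d) - s * m) s = 0 := by
    intro s; rw [(key s).deriv, h]; ring
  have hconst := is_const_of_deriv_eq_zero (fun s => (key s).differentiableAt) hd t 0
  simp only [zero_smul, add_zero, zero_mul, sub_zero] at hconst
  linarith [hconst]

lemma const_along {u : V3 → ℝ} (hu : Differentiable ℝ u) {d : V3}
    (h : ∀ ξ, fderiv ℝ u ξ d = 0) (ξ : V3) (t : ℝ) : u (ξ + t • d) = u ξ := by
  simpa using line_eq hu h ξ t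

/-- if `u ∘ P = u` for a CLM `P`, then directional derivatives transfer -/
lemma fderiv_comp_fix {u : V3 → ℝ} (hu : Differentiable ℝ u) (P : V3 →L[ℝ] V3)
    (hP : ∀ ξ, u (P ξ) = u ξ) (ξ : V3) (d : V3) :
    fderiv ℝ u ξ d = fderiv ℝ u (P ξ) (P d) := by
  have h1 : HasFDerivAt (fun ξ => u (P ξ)) ((fderiv ℝ u (P ξ)).comp P) ξ :=
    (hu (P ξ)).hasFDerivAt.comp ξ P.hasFDerivAt
  have h2 : (fun ξ => u (P ξ)) = u := funext hP
  rw [h2] at h1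
  rw [h1.fderiv]; rfl

lemma fderiv_comp_proj {v : V3 → V3} (hv : Differentiable ℝ v) (i : Fin 3) (ξ d : V3) :
    fderiv ℝ (fun ξ => v ξ i) ξ d = fderiv ℝ v ξ d i := by
  have h := hasFDerivAt_pi'.1 (hv ξ).hasFDerivAt i
  rw [h.fderiv]; rfl

/-- projections as CLMs -/
noncomputable def P12 : V3 →L[ℝ] V3 := ContinuousLinearMap.pi ![proj 0, proj 1, 0]
noncomputable def P1 : V3 →L[ℝ] V3 := ContinuousLinearMap.pi ![proj 0, 0, 0]
noncomputable def P2 : V3 →L[ℝ] V3 := ContinuousLinearMap.pi ![0, proj 1, 0]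

lemma P12_apply (ξ : V3) : P12 ξ = ![ξ 0, ξ 1, 0] := by
  funext i; fin_cases i <;> simp [P12, Matrix.cons_val_two, Matrix.tail_cons]

lemma P1_apply (ξ : V3) : P1 ξ = ![ξ 0, 0, 0] := by
  funext i; fin_cases i <;> simp [P1, Matrix.cons_val_two, Matrix.tail_cons]

lemma P2_apply (ξ : V3) : P2 ξ = ![0, ξ 1, 0] := by
  funext i; fin_cases i <;> simp [P2, Matrix.cons_val_two, Matrix.tail_cons]

end SymmAux
namespace SymmAux
open ContinuousLinearMap

variable {K : ℕ} {v : V3 → V3}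

lemma extract_g (hv : Differentiable ℝ v)
    (hs : InfSymmOn Set.univ (fPk (K+1)) g0 v) (ξ : V3) :
    fderiv ℝ (fun η => v η 0) ξ E2 = 0 ∧ fderiv ℝ (fun η => v η 1) ξ E2 = 0 := by
  obtain ⟨⟨c, hc⟩, -⟩ := hs ξ (Set.mem_univ ξ)
  have hgconst : fderiv ℝ g0 ξ = 0 := fderiv_const_apply _
  rw [lieBr] at hc
  have h0 := congrFun hc 0
  have h1 := congrFun hc 1
  rw [fderiv_comp_proj hv 0, fderiv_comp_proj hv 1]
  simp only [hgconst, ContinuousLinearMap.zero_apply, g0, E2, Pi.sub_apply, Pi.zero_apply,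
    Pi.smul_apply, smul_eq_mul, Matrix.cons_val_zero, Matrix.cons_val_one, Matrix.head_cons] at h0 h1 ⊢
  constructor <;> linarith

lemma extract_f (hv : Differentiable ℝ v)
    (hs : InfSymmOn Set.univ (fPk (K+1)) g0 v) (ξ : V3) :
    ((2*(K:ℝ)+2) * (ξ 2)^(2*K+1) * v ξ 2
        = (ξ 2)^(2*K+2) * fderiv ℝ (fun η => v η 0) ξ E0
          + (ξ 2)^(K+1) * fderiv ℝ (fun η => v η 0) ξ E1) ∧
    (((K:ℝ)+1) * (ξ 2)^K * v ξ 2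
        = (ξ 2)^(2*K+2) * fderiv ℝ (fun η => v η 1) ξ E0
          + (ξ 2)^(K+1) * fderiv ℝ (fun η => v η 1) ξ E1) := by
  obtain ⟨-, ⟨c, hc⟩⟩ := hs ξ (Set.mem_univ ξ)
  rw [lieBr, (hasFDerivAt_fPk (K+1) ξ).fderiv] at hc
  have hsplit : fPk (K+1) ξ = (ξ 2)^(2*(K+1)) • E0 + (ξ 2)^(K+1) • E1 := by
    funext i; fin_cases i <;> simp [fPk, E0, E1]
  rw [hsplit] at hc
  have h0 := congrFun hc 0
  have h1 := congrFun hc 1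
  rw [fderiv_comp_proj hv 0 ξ E0, fderiv_comp_proj hv 0 ξ E1,
    fderiv_comp_proj hv 1 ξ E0, fderiv_comp_proj hv 1 ξ E1]
  have e1 : 2*(K+1)-1 = 2*K+1 := by omega
  have e2 : (K+1)-1 = K := by omega
  have e3 : 2*(K+1) = 2*K+2 := by omega
  simp only [Dfk_apply, e1, e2, e3, map_add, map_smul, g0, Pi.sub_apply, Pi.add_apply,
    Pi.smul_apply, smul_eq_mul, Matrix.cons_val_zero, Matrix.cons_val_one, Matrix.head_cons] at h0 h1
  push_cast at h0 h1
  constructor <;> linarith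

end SymmAux
namespace SymmAux
open ContinuousLinearMap

variable {K : ℕ} {v : V3 → V3}

lemma comp_diff (hv : Differentiable ℝ v) (i : Fin 3) :
    Differentiable ℝ (fun ξ => v ξ i) :=
  fun ξ => (hasFDerivAt_pi'.1 (hv ξ).hasFDerivAt i).differentiableAt

/-- v·0 and v·1 are invariant under killing the third coordinate -/
lemma P12_shift (ξ : V3) : P12 ξ = ξ + (-(ξ 2)) • E2 := by
  rw [P12_apply]; funext j; fin_cases j <;> simp [E2]

lemma fix_P12_0 (hv : Differentiable ℝ v)
    (hs : InfSymmOn Set.univ (fPk (K+1)) g0 v) (ξ : V3) :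
    v (P12 ξ) 0 = v ξ 0 := by
  rw [P12_shift]
  exact const_along (comp_diff hv 0) (fun η => (extract_g hv hs η).1) ξ _

lemma fix_P12_1 (hv : Differentiable ℝ v)
    (hs : InfSymmOn Set.univ (fPk (K+1)) g0 v) (ξ : V3) :
    v (P12 ξ) 1 = v ξ 1 := by
  rw [P12_shift]
  exact const_along (comp_diff hv 1) (fun η => (extract_g hv hs η).2) ξ _

lemma key_relations (hv : Differentiable ℝ v)
    (hs : InfSymmOn Set.univ (fPk (K+1)) g0 v) (ξ : V3) :
    fderiv ℝ (fun η => v η 0) ξ E1 = 0 ∧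
    fderiv ℝ (fun η => v η 1) ξ E0 = 0 ∧
    fderiv ℝ (fun η => v η 0) ξ E0 = 2 * fderiv ℝ (fun η => v η 1) ξ E1 := by
  -- directional derivatives transfer along P12
  have htrans : ∀ (i : Fin 3), (∀ η : V3, v (P12 η) i = v η i) → ∀ (d : V3), P12 d = d →
      ∀ η : V3, fderiv ℝ (fun η => v η i) η d
        = fderiv ℝ (fun η => v η i) (P12 η) d := by
    intro i hfix d hd η
    have := fderiv_comp_fix (comp_diff hv i) P12 hfix η d
    rwa [hd] at this
  have ht0 := htrans 0 (fix_P12_0 hv hs)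
  have ht1 := htrans 1 (fix_P12_1 hv hs)
  have hE0 : P12 E0 = E0 := by rw [P12_apply]; funext j; fin_cases j <;> simp [E0]
  have hE1 : P12 E1 = E1 := by rw [P12_apply]; funext j; fin_cases j <;> simp [E1]
  set Ax := fderiv ℝ (fun η => v η 0) (P12 ξ) E0 with hAx
  set Ay := fderiv ℝ (fun η => v η 0) (P12 ξ) E1 with hAy
  set Bx := fderiv ℝ (fun η => v η 1) (P12 ξ) E0 with hBx
  set By := fderiv ℝ (fun η => v η 1) (P12 ξ) E1 with hBy
  have claim : ∀ u : ℝ, 0 < u → u^2*Ax + u*Ay = 2*u^3*Bx + 2*u^2*By := by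
    intro u hu
    set w : ℝ := u ^ (((K+1 : ℕ) : ℝ))⁻¹ with hwdef
    have hwpos : 0 < w := Real.rpow_pos_of_pos hu _
    have hwk : w ^ (K+1) = u := Real.rpow_inv_natCast_pow hu.le (Nat.succ_ne_zero K)
    set η : V3 := ![ξ 0, ξ 1, w] with hηdef
    have hη2 : η 2 = w := by simp [hηdef]
    have hPη : P12 η = P12 ξ := by
      rw [P12_apply, P12_apply]; funext j; fin_cases j <;> simp [hηdef]
    obtain ⟨e1, e2⟩ := extract_f hv hs η
    rw [hη2] at e1 e2
    rw [ht0 E0 hE0 η, ht0 E1 hE1 η, hPη] at e1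
    rw [ht1 E0 hE0 η, ht1 E1 hE1 η, hPη] at e2
    rw [← hAx, ← hAy] at e1
    rw [← hBx, ← hBy] at e2
    have hkey : w * (u^2*Ax + u*Ay) = w * (2*u^3*Bx + 2*u^2*By) := by
      rw [← hwk]
      linear_combination 2 * w^(K+2) * e2 - w * e1
    exact mul_left_cancel₀ hwpos.ne' hkey
  have c1 := claim 1 one_pos
  have c2 := claim 2 two_pos
  have c3 := claim 3 (by norm_num)
  norm_num at c1 c2 c3
  have hBx0 : Bx = 0 := by linarith
  have hAy0 : Ay = 0 := by linarith
  have hAB : Ax = 2 * By := by linarith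
  refine ⟨?_, ?_, ?_⟩
  · rw [ht0 E1 hE1 ξ, ← hAy, hAy0]
  · rw [ht1 E0 hE0 ξ, ← hBx, hBx0]
  · rw [ht0 E0 hE0 ξ, ht1 E1 hE1 ξ, ← hAx, ← hBy, hAB]

end SymmAux
namespace SymmAux
open ContinuousLinearMap

variable {K : ℕ} {v : V3 → V3}

lemma forward (hv : ContDiff ℝ (⊤ : ℕ∞) v)
    (hs : InfSymmOn Set.univ (fPk (K+1)) g0 v) :
    ∃ a b c : ℝ, v = fun ξ =>
      ![2 * a * ξ 0 + b, a * ξ 1 + c, a * ξ 2 / ((K+1 : ℕ) : ℝ)] := by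
  have hvd : Differentiable ℝ v := hv.differentiable (by simp)
  have key := key_relations hvd hs
  -- v·0 invariant under P1 (kills y and w)
  have fix10 : ∀ ξ : V3, v (P1 ξ) 0 = v ξ 0 := by
    intro ξ
    have h1 : P1 ξ = P12 ξ + (-(ξ 1)) • E1 := by
      rw [P1_apply, P12_apply]; funext j; fin_cases j <;> simp [E1]
    rw [h1, const_along (comp_diff hvd 0) (fun η => (key η).1) (P12 ξ) _,
      fix_P12_0 hvd hs]
  have fix21 : ∀ ξ : V3, v (P2 ξ) 1 = v ξ 1 := by
    intro ξ
    have h1 : P2 ξ = P12 ξ + (-(ξ 0)) • E0 := by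
      rw [P2_apply, P12_apply]; funext j; fin_cases j <;> simp [E0]
    rw [h1, const_along (comp_diff hvd 1) (fun η => (key η).2.1) (P12 ξ) _,
      fix_P12_1 hvd hs]
  have hP1E0 : P1 E0 = E0 := by rw [P1_apply]; funext j; fin_cases j <;> simp [E0]
  have hP2E1 : P2 E1 = E1 := by rw [P2_apply]; funext j; fin_cases j <;> simp [E1]
  set a : ℝ := fderiv ℝ (fun η => v η 1) ![0,0,0] E1 with ha
  -- By is globally constant equal to a
  have hBy : ∀ ξ : V3, fderiv ℝ (fun η => v η 1) ξ E1 = a := by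
    intro ξ
    have h1 : fderiv ℝ (fun η => v η 1) ξ E1
        = fderiv ℝ (fun η => v η 1) (P2 ξ) E1 := by
      have := fderiv_comp_fix (comp_diff hvd 1) P2 fix21 ξ E1
      rwa [hP2E1] at this
    have h2 : fderiv ℝ (fun η => v η 0) (P2 ξ) E0
        = fderiv ℝ (fun η => v η 0) (P1 (P2 ξ)) E0 := by
      have := fderiv_comp_fix (comp_diff hvd 0) P1 fix10 (P2 ξ) E0
      rwa [hP1E0] at this
    have h3 : P1 (P2 ξ) = ![0,0,0] := by
      rw [P2_apply, P1_apply]; funext j; fin_cases j <;> simp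
    have k1 := (key (P2 ξ)).2.2
    have k2 := (key (![0,0,0] : V3)).2.2
    rw [h2, h3] at k1
    rw [h1]
    linarith [k1, k2]
  have hAx : ∀ ξ : V3, fderiv ℝ (fun η => v η 0) ξ E0 = 2 * a := by
    intro ξ; rw [(key ξ).2.2, hBy ξ]
  -- the affine forms of the first two components
  set b : ℝ := v ![0,0,0] 0 with hb
  set c : ℝ := v ![0,0,0] 1 with hc
  have form0 : ∀ ξ : V3, v ξ 0 = 2 * a * ξ 0 + b := by
    intro ξ
    have hξ := decomp ξ
    calc v ξ 0 = (fun η => v η 0) (((![0,0,0] + ξ 0 • E0) + ξ 1 • E1) + ξ 2 • E2) := by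
          rw [← hξ]
      _ = (fun η => v η 0) ((![0,0,0] + ξ 0 • E0) + ξ 1 • E1) :=
          const_along (comp_diff hvd 0) (fun η => (extract_g hvd hs η).1) _ _
      _ = (fun η => v η 0) (![0,0,0] + ξ 0 • E0) :=
          const_along (comp_diff hvd 0) (fun η => (key η).1) _ _
      _ = v ![0,0,0] 0 + ξ 0 * (2 * a) := line_eq (comp_diff hvd 0) hAx _ _
      _ = 2 * a * ξ 0 + b := by rw [← hb]; ring
  have form1 : ∀ ξ : V3, v ξ 1 = a * ξ 1 + c := by
    intro ξ
    have hξ := decomp ξ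
    calc v ξ 1 = (fun η => v η 1) (((![0,0,0] + ξ 0 • E0) + ξ 1 • E1) + ξ 2 • E2) := by
          rw [← hξ]
      _ = (fun η => v η 1) ((![0,0,0] + ξ 0 • E0) + ξ 1 • E1) :=
          const_along (comp_diff hvd 1) (fun η => (extract_g hvd hs η).2) _ _
      _ = (fun η => v η 1) (![0,0,0] + ξ 0 • E0) + ξ 1 * a := line_eq (comp_diff hvd 1) hBy _ _
      _ = v ![0,0,0] 1 + ξ 1 * a :=
          congrArg (fun z => z + ξ 1 * a)
            (const_along (comp_diff hvd 1) (fun η => (key η).2.1) ![0,0,0] (ξ 0))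
      _ = a * ξ 1 + c := by rw [← hc]; ring
  -- the third component, away from w = 0
  have form2ne : ∀ ξ : V3, ξ 2 ≠ 0 → v ξ 2 = a * ξ 2 / ((K:ℝ) + 1) := by
    intro ξ hw
    have e2 := (extract_f hvd hs ξ).2
    rw [(key ξ).2.1, hBy ξ] at e2
    have hwK : (ξ 2) ^ K ≠ 0 := pow_ne_zero _ hw
    have h' : (ξ 2)^K * (((K:ℝ)+1) * v ξ 2) = (ξ 2)^K * (ξ 2 * a) := by
      linear_combination e2
    have h'' := mul_left_cancel₀ hwK h'
    have hKpos : ((K:ℝ) + 1) ≠ 0 := by positivity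
    field_simp
    linarith [h'']
  -- extend by continuity to w = 0
  have form2 : ∀ ξ : V3, v ξ 2 = a * ξ 2 / ((K:ℝ) + 1) := by
    intro ξ
    have hcont : Continuous (fun t : ℝ => v ![ξ 0, ξ 1, t] 2) := by
      have h1 : Continuous (fun t : ℝ => (![ξ 0, ξ 1, t] : V3)) := by
        apply continuous_pi
        intro j; fin_cases j <;> simp
        exacts [continuous_const, continuous_const, continuous_id]
      exact (continuous_apply 2).comp (hv.continuous.comp h1)
    have hcont2 : Continuous (fun t : ℝ => a * t / ((K:ℝ) + 1)) :=
      (continuous_const.mul continuous_id).div_const _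
    have heq : (fun t : ℝ => v ![ξ 0, ξ 1, t] 2) = fun t => a * t / ((K:ℝ) + 1) := by
      apply Continuous.ext_on (dense_compl_singleton (0:ℝ)) hcont hcont2
      intro t ht
      have ht' : t ≠ 0 := ht
      have := form2ne ![ξ 0, ξ 1, t] (by simpa using ht')
      simpa using this
    have := congrFun heq (ξ 2)
    have hξ : (![ξ 0, ξ 1, ξ 2] : V3) = ξ := by
      funext j; fin_cases j <;> simp
    rwa [hξ] at this
  refine ⟨a, b, c, ?_⟩
  funext ξ i
  fin_cases i
  · simpa using form0 ξ
  · simpa using form1 ξ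
  · have h2 := form2 ξ
    push_cast
    simpa using h2

end SymmAux
namespace SymmAux
open ContinuousLinearMap

noncomputable def Lmap (a : ℝ) (k : ℕ) : V3 →L[ℝ] V3 :=
  ContinuousLinearMap.pi ![(2*a) • proj 0, a • proj 1, (a/(k:ℝ)) • proj 2]

lemma Lmap_apply (a : ℝ) (k : ℕ) (ξ : V3) :
    Lmap a k ξ = ![2*a*ξ 0, a*ξ 1, (a/(k:ℝ))*ξ 2] := by
  funext i; fin_cases i <;> simp [Lmap, Matrix.cons_val_two, Matrix.tail_cons, mul_assoc]

lemma hasFDerivAt_vF (a b c : ℝ) (k : ℕ) (ξ : V3) :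
    HasFDerivAt (fun ξ : V3 => ![2*a*ξ 0 + b, a*ξ 1 + c, a*ξ 2/(k:ℝ)]) (Lmap a k) ξ := by
  apply hasFDerivAt_pi''
  intro i
  fin_cases i <;>
    simp only [Lmap, proj_pi, Matrix.cons_val_zero, Matrix.cons_val_one, Matrix.head_cons,
      Matrix.cons_val_two, Matrix.tail_cons, Fin.isValue]
  · exact ((hasFDerivAt_apply 0 ξ).const_mul (2*a)).add_const b
  · exact ((hasFDerivAt_apply 1 ξ).const_mul a).add_const c
  · show HasFDerivAt (fun x : V3 => a * x 2 / (k:ℝ)) ((a/(k:ℝ)) • proj 2) ξ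
    have h : (fun ξ : V3 => a * ξ 2 / (k:ℝ)) = fun ξ : V3 => (a/(k:ℝ)) * ξ 2 := by
      funext η; ring
    rw [h]
    exact (hasFDerivAt_apply 2 ξ).const_mul _

lemma backward {k : ℕ} (hk : 1 ≤ k) (a b c : ℝ) :
    ContDiff ℝ (⊤ : ℕ∞) (fun ξ : V3 => ![2*a*ξ 0 + b, a*ξ 1 + c, a*ξ 2/(k:ℝ)]) ∧
    InfSymmOn Set.univ (fPk k) g0 (fun ξ : V3 => ![2*a*ξ 0 + b, a*ξ 1 + c, a*ξ 2/(k:ℝ)]) := by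
  obtain ⟨K, rfl⟩ : ∃ K, k = K + 1 := ⟨k-1, (Nat.succ_pred_eq_of_pos hk).symm⟩
  constructor
  · have h : (fun ξ : V3 => ![2*a*ξ 0 + b, a*ξ 1 + c, a*ξ 2/((K+1 : ℕ):ℝ)]) =
        (fun ξ : V3 => ![b, c, 0] + Lmap a (K+1) ξ) := by
      funext ξ i; fin_cases i <;> simp [Lmap_apply] <;> ring
    rw [h]
    exact contDiff_const.add (Lmap a (K+1)).contDiff
  · intro ξ _
    have hKne : ((K:ℝ) + 1) ≠ 0 := by positivity
    constructor
    · refine ⟨-(a/((K+1 : ℕ):ℝ)), ?_⟩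
      rw [lieBr, (hasFDerivAt_vF a b c (K+1) ξ).fderiv]
      have hg : fderiv ℝ g0 ξ = 0 := fderiv_const_apply _
      rw [hg]
      funext i
      fin_cases i <;> simp [g0, Lmap_apply]
    · refine ⟨0, ?_⟩
      rw [lieBr, (hasFDerivAt_vF a b c (K+1) ξ).fderiv, (hasFDerivAt_fPk (K+1) ξ).fderiv]
      have e1 : 2*(K+1)-1 = 2*K+1 := by omega
      have e2 : (K+1)-1 = K := by omega
      have e3 : 2*(K+1) = 2*K+2 := by omega
      funext i
      fin_cases i <;>
        simp only [Dfk_apply, Lmap_apply, fPk, g0, e1, e2, e3, Pi.sub_apply, Pi.smul_apply,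
          smul_eq_mul, Matrix.cons_val_zero, Matrix.cons_val_one, Matrix.head_cons,
          Matrix.cons_val_two, Matrix.tail_cons, zero_smul, Pi.zero_apply, Fin.isValue]
      · push_cast; field_simp; ring
      · push_cast; field_simp; ring
      · push_cast; field_simp; ring

/-- derivative of the scaling field -/
noncomputable def Mk (k : ℕ) : V3 →L[ℝ] V3 :=
  ContinuousLinearMap.pi ![(2:ℝ) • proj 0, proj 1, ((k:ℝ))⁻¹ • proj 2]

lemma Mk_apply (k : ℕ) (ξ : V3) : Mk k ξ = ![2 * ξ 0, ξ 1, ((k:ℝ))⁻¹ * ξ 2] := by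
  funext i; fin_cases i <;> simp [Mk, Matrix.cons_val_two, Matrix.tail_cons]

lemma hasFDerivAt_Mk (k : ℕ) (ξ : V3) :
    HasFDerivAt (fun ζ : V3 => ![2 * ζ 0, ζ 1, ζ 2 / (k:ℝ)]) (Mk k) ξ := by
  apply hasFDerivAt_pi''
  intro i
  fin_cases i <;>
    simp only [Mk, proj_pi, Matrix.cons_val_zero, Matrix.cons_val_one, Matrix.head_cons,
      Matrix.cons_val_two, Matrix.tail_cons, Fin.isValue]
  · exact (hasFDerivAt_apply 0 ξ).const_mul 2
  · exact hasFDerivAt_apply 1 ξ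
  · show HasFDerivAt (fun x : V3 => x 2 / (k:ℝ)) (((k:ℝ))⁻¹ • proj 2) ξ
    have h : (fun ζ : V3 => ζ 2 / (k:ℝ)) = fun ζ : V3 => ((k:ℝ))⁻¹ * ζ 2 := by
      funext η; ring
    rw [h]
    exact (hasFDerivAt_apply 2 ξ).const_mul _

end SymmAux

/-- for k ≥ 1, the Lie algebra of infinitesimal symmetries of Σ_P^{0,k}
is exactly the real span of (1,0,0), (0,1,0) and (2x, y, w/k); these fields satisfy the
bracket relations [v₁,v₂] = 0, [v₁,v₃] = 2v₁, [v₂,v₃] = v₂, so the symmetry algebra is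
isomorphic to 𝔏_P. -/
theorem symmetry_algebra_of_parabolic_k (k : ℕ) (hk : 1 ≤ k) :
    ({v : V3 → V3 | ContDiff ℝ (⊤ : ℕ∞) v ∧ InfSymmOn univ (fPk k) g0 v} =
      {v : V3 → V3 | ∃ a b c : ℝ,
        v = fun ξ => ![2 * a * ξ 0 + b, a * ξ 1 + c, a * ξ 2 / (k : ℝ)]}) ∧
    (∀ ξ : V3,
      lieBr (fun _ => ![1, 0, 0]) (fun _ => ![0, 1, 0]) ξ = 0 ∧
      lieBr (fun _ => ![(1:ℝ), 0, 0]) (fun ζ => ![2 * ζ 0, ζ 1, ζ 2 / (k : ℝ)]) ξ =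
        (2 : ℝ) • ![(1:ℝ), 0, 0] ∧
      lieBr (fun _ => ![(0:ℝ), 1, 0]) (fun ζ => ![2 * ζ 0, ζ 1, ζ 2 / (k : ℝ)]) ξ =
        ![(0:ℝ), 1, 0]) := by
  constructor
  · obtain ⟨K, rfl⟩ : ∃ K, k = K + 1 := ⟨k-1, (Nat.succ_pred_eq_of_pos hk).symm⟩
    ext v
    simp only [Set.mem_setOf_eq]
    constructor
    · rintro ⟨hv, hs⟩
      exact SymmAux.forward hv hs
    · rintro ⟨a, b, c, rfl⟩
      exact SymmAux.backward hk a b c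
  · intro ξ
    refine ⟨?_, ?_, ?_⟩
    · rw [lieBr, fderiv_const_apply, fderiv_const_apply]
      simp
    · rw [lieBr, (SymmAux.hasFDerivAt_Mk k ξ).fderiv, fderiv_const_apply]
      funext i
      fin_cases i <;> simp [SymmAux.Mk_apply]
    · rw [lieBr, (SymmAux.hasFDerivAt_Mk k ξ).fderiv, fderiv_const_apply]
      funext i
      fin_cases i <;> simp [SymmAux.Mk_apply]
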